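/- arXiv:2403.15936 — 3 statements merged into one kernel-verified Lean document; each statement's English description precedes it below -/
import Mathlib

section
/- Sufficient optimality condition for service-chain forwarding and offloading (Theorem 2): In the service-chain model, let (φ,t) be feasible for r and let λ be a marginal vector for (φ,t) satisfying the sufficient-optimality condition. Then (φ,t) is a global optimum of the total-cost minimization problem: T(φ,t) ≤ T(φ†,t†) for every pair (φ†,t†) feasible for the same input rates r. -/
/-!
Convexity of the link and node costs bounds `T(φ',t')` from below by `T(φ,t)` plus the
derivative of `T` at `(φ,t)` applied to the change of flows, so it suffices that this first-order
term is nonnegative. Weight the modified marginals `δ` by the traffic of a feasible pair `(ψ,s)`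
and sum over all nodes and stages: flow conservation telescopes the `λ`-part, leaving the
linearized cost of `(ψ,s)` plus `Σ s λ - Σ r λ(·,0)`. For `(φ,t)` itself the marginal recursion
makes the weighted sum equal to `Σ t λ`; for any other feasible pair the optimality condition
gives `λ ≤ min δ ≤ Σ_j ψ_j δ_j`. Hence the linearized cost of `(φ',t')` is at least
`Σ r λ(·,0)`, which is that of `(φ,t)`.
-/

open scoped BigOperators
open Classical

/-- The service-chain network model: a finite directed graph, a finite set of
applications, each with a chain length, a destination, packet sizes and computation
weights, together with nondecreasing convex continuously differentiable link and
computation cost functions (with their derivatives). -/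
structure SCNet (V A : Type) [Fintype V] [DecidableEq V] [Fintype A] where
  /-- the edge relation -/
  E : V → V → Prop
  /-- chain length of each application -/
  K : A → ℕ
  /-- destination of each application -/
  dest : A → V
  /-- packet size of each stage -/
  L : A → ℕ → ℝ
  hL : ∀ a k, k ≤ K a → 0 < L a k
  /-- computation weights -/
  w : V → A → ℕ → ℝ
  hw : ∀ i a k, k ≤ K a → 0 < w i a k
  /-- link cost functions -/
  D : V → V → ℝ → ℝ
  /-- derivative of the link cost functions -/
  D' : V → V → ℝ → ℝ
  /-- computation cost functions -/
  C : V → ℝ → ℝ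
  /-- derivative of the computation cost functions -/
  C' : V → ℝ → ℝ
  hD_mono : ∀ i j, E i j → MonotoneOn (D i j) (Set.Ici 0)
  hD_conv : ∀ i j, E i j → ConvexOn ℝ (Set.Ici 0) (D i j)
  hD_deriv : ∀ i j, E i j → ∀ x ∈ Set.Ici (0 : ℝ),
    HasDerivWithinAt (D i j) (D' i j x) (Set.Ici 0) x
  hD'_cont : ∀ i j, E i j → ContinuousOn (D' i j) (Set.Ici 0)
  hC_mono : ∀ i, MonotoneOn (C i) (Set.Ici 0)
  hC_conv : ∀ i, ConvexOn ℝ (Set.Ici 0) (C i)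
  hC_deriv : ∀ i, ∀ x ∈ Set.Ici (0 : ℝ),
    HasDerivWithinAt (C i) (C' i x) (Set.Ici 0) x
  hC'_cont : ∀ i, ContinuousOn (C' i) (Set.Ici 0)

variable {V A : Type} [Fintype V] [DecidableEq V] [Fintype A]

/-- A forwarding strategy: `φ i (some j) a k` is the fraction of stage-(a,k) traffic
that node `i` forwards to node `j`; `φ i none a k` is the fraction forwarded to `i`'s CPU. -/
structure IsStrategy (N : SCNet V A) (φ : V → Option V → A → ℕ → ℝ) : Prop where
  nonneg : ∀ i j a k, 0 ≤ φ i j a k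
  le_one : ∀ i j a k, φ i j a k ≤ 1
  no_edge : ∀ i j a k, ¬ N.E i j → φ i (some j) a k = 0
  cpu_last : ∀ i a, φ i none a (N.K a) = 0
  sum_one : ∀ i a k, k ≤ N.K a → ¬(i = N.dest a ∧ k = N.K a) →
    φ i none a k + ∑ j, φ i (some j) a k = 1
  sum_dest : ∀ a,
    φ (N.dest a) none a (N.K a) + ∑ j, φ (N.dest a) (some j) a (N.K a) = 0

/-- A traffic vector for input rates `r` and strategy `φ`. -/
structure IsTraffic (N : SCNet V A) (r : V → A → ℝ) (φ : V → Option V → A → ℕ → ℝ)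
    (t : V → A → ℕ → ℝ) : Prop where
  nonneg : ∀ i a k, 0 ≤ t i a k
  base : ∀ i a, t i a 0 = r i a + ∑ j, t j a 0 * φ j (some i) a 0
  step : ∀ i a k, 1 ≤ k → k ≤ N.K a →
    t i a k = (∑ j, t j a k * φ j (some i) a k) + t i a (k - 1) * φ i none a (k - 1)

/-- A pair (strategy, traffic) feasible for the input rates `r`. -/
def Feasible (N : SCNet V A) (r : V → A → ℝ) (φ : V → Option V → A → ℕ → ℝ)
    (t : V → A → ℕ → ℝ) : Prop :=
  IsStrategy N φ ∧ IsTraffic N r φ t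

/-- Total flow (bit/sec) on link `(i,j)`. -/
noncomputable def linkFlow (N : SCNet V A) (φ : V → Option V → A → ℕ → ℝ)
    (t : V → A → ℕ → ℝ) (i j : V) : ℝ :=
  ∑ a, ∑ k ∈ Finset.range (N.K a + 1), N.L a k * (t i a k * φ i (some j) a k)

/-- Total computation workload at node `i`. -/
noncomputable def workload (N : SCNet V A) (φ : V → Option V → A → ℕ → ℝ)
    (t : V → A → ℕ → ℝ) (i : V) : ℝ :=
  ∑ a, ∑ k ∈ Finset.range (N.K a + 1), N.w i a k * (t i a k * φ i none a k)

/-- The aggregated communication and computation cost `T(φ,t)`. -/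
noncomputable def totalCost (N : SCNet V A) (φ : V → Option V → A → ℕ → ℝ)
    (t : V → A → ℕ → ℝ) : ℝ :=
  (∑ i, ∑ j, if N.E i j then N.D i j (linkFlow N φ t i j) else 0)
    + ∑ i, N.C i (workload N φ t i)

/-- A marginal-cost vector `λ` for the pair `(φ,t)`, i.e. a solution of the
recursion defining `∂T/∂t_i(a,k)`. -/
structure IsMarginal (N : SCNet V A) (φ : V → Option V → A → ℕ → ℝ)
    (t : V → A → ℕ → ℝ) (lam : V → A → ℕ → ℝ) : Prop where
  last : ∀ i a, lam i a (N.K a) =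
    ∑ j, φ i (some j) a (N.K a) *
      (N.L a (N.K a) * N.D' i j (linkFlow N φ t i j) + lam j a (N.K a))
  step : ∀ i a k, k < N.K a →
    lam i a k =
      (∑ j, φ i (some j) a k * (N.L a k * N.D' i j (linkFlow N φ t i j) + lam j a k))
        + φ i none a k * (N.w i a k * N.C' i (workload N φ t i) + lam i a (k + 1))

/-- `j` is an admissible forwarding direction at node `i` and stage `(a,k)`:
either a physical out-neighbor, or the CPU provided `k < K a`. -/
def Admissible (N : SCNet V A) (i : V) (a : A) (k : ℕ) : Option V → Prop
  | some j => N.E i j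
  | none => k < N.K a

/-- The modified marginals `δ_{ij}(a,k)`. -/
noncomputable def mdelta (N : SCNet V A) (φ : V → Option V → A → ℕ → ℝ)
    (t : V → A → ℕ → ℝ) (lam : V → A → ℕ → ℝ) (i : V) (a : A) (k : ℕ) :
    Option V → ℝ
  | some j => N.L a k * N.D' i j (linkFlow N φ t i j) + lam j a k
  | none => N.w i a k * N.C' i (workload N φ t i) + lam i a (k + 1)

/-- The sufficient-optimality condition: every direction used at node `i` for stage
`(a,k)` achieves the minimum modified marginal over all admissible directions. -/
def SuffCond (N : SCNet V A) (φ : V → Option V → A → ℕ → ℝ)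
    (t : V → A → ℕ → ℝ) (lam : V → A → ℕ → ℝ) : Prop :=
  ∀ i a k, k ≤ N.K a → ∀ j, Admissible N i a k j → 0 < φ i j a k →
    ∀ j', Admissible N i a k j' →
      mdelta N φ t lam i a k j ≤ mdelta N φ t lam i a k j'

theorem ConvexOn.add_mul_sub_le_of_hasDerivWithinAt {S : Set ℝ} {f : ℝ → ℝ} {f' x y : ℝ}
    (hf : ConvexOn ℝ S f) (hx : x ∈ S) (hy : y ∈ S) (hf' : HasDerivWithinAt f f' S x) :
    f x + f' * (y - x) ≤ f y := by
  rcases lt_trichotomy x y with hxy | rfl | hyx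
  · have h := hf.le_slope_of_hasDerivWithinAt hx hy hxy hf'
    rw [slope_def_field, le_div_iff₀ (sub_pos.mpr hxy)] at h
    linarith
  · simp
  · have h := hf.slope_le_of_hasDerivWithinAt hy hx hyx hf'
    rw [slope_def_field, div_le_iff₀ (sub_pos.mpr hyx)] at h
    linarith

theorem sum_range_inflow_add_carry_mul (n : ℕ) (r : ℝ) (s b c μ : ℕ → ℝ)
    (h0 : s 0 = r + b 0) (hsucc : ∀ k < n, s (k + 1) = b (k + 1) + c k) (hc : c n = 0) :
    ∑ k ∈ Finset.range (n + 1), (b k * μ k + c k * μ (k + 1))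
      = ∑ k ∈ Finset.range (n + 1), s k * μ k - r * μ 0 := by
  have hs : ∑ k ∈ Finset.range n, s (k + 1) * μ (k + 1)
      = ∑ k ∈ Finset.range n, (b (k + 1) * μ (k + 1) + c k * μ (k + 1)) :=
    Finset.sum_congr rfl fun k hk => by rw [hsucc k (Finset.mem_range.mp hk)]; ring
  rw [Finset.sum_add_distrib, Finset.sum_range_succ' (fun k => b k * μ k),
    Finset.sum_range_succ (fun k => c k * μ (k + 1)), Finset.sum_range_succ' (fun k => s k * μ k),
    hs, Finset.sum_add_distrib, h0, hc]
  ring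

theorem mul_le_mul_of_nonneg_of_pos_imp {p x y : ℝ} (hp : 0 ≤ p) (h : 0 < p → x ≤ y) :
    p * x ≤ p * y := by
  rcases hp.eq_or_lt with rfl | hp
  · simp
  · exact mul_le_mul_of_nonneg_left (h hp) hp.le

theorem Finset.sum_comm_dependent {β ι κ M : Type*} [AddCommMonoid M] (u : Finset β)
    (s : Finset ι) (t : ι → Finset κ) (g : β → ι → κ → M) :
    ∑ b ∈ u, ∑ a ∈ s, ∑ k ∈ t a, g b a k = ∑ a ∈ s, ∑ k ∈ t a, ∑ b ∈ u, g b a k := by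
  rw [Finset.sum_comm]
  exact Finset.sum_congr rfl fun a _ => Finset.sum_comm

namespace SCNet

variable (N : SCNet V A)

def stageSum (f : V → A → ℕ → ℝ) : ℝ :=
  ∑ a, ∑ k ∈ Finset.range (N.K a + 1), ∑ i, f i a k

variable {N}

theorem stageSum_le_stageSum {f g : V → A → ℕ → ℝ}
    (h : ∀ i a k, k ≤ N.K a → f i a k ≤ g i a k) : N.stageSum f ≤ N.stageSum g :=
  Finset.sum_le_sum fun a _ => Finset.sum_le_sum fun k hk => Finset.sum_le_sum fun i _ =>
    h i a k (Nat.lt_succ_iff.mp (Finset.mem_range.mp hk))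

theorem stageSum_congr {f g : V → A → ℕ → ℝ}
    (h : ∀ i a k, k ≤ N.K a → f i a k = g i a k) : N.stageSum f = N.stageSum g :=
  (stageSum_le_stageSum fun i a k hk => (h i a k hk).le).antisymm
    (stageSum_le_stageSum fun i a k hk => (h i a k hk).ge)

theorem stageSum_add (f g : V → A → ℕ → ℝ) :
    N.stageSum (fun i a k => f i a k + g i a k) = N.stageSum f + N.stageSum g := by
  simp only [stageSum, Finset.sum_add_distrib]

end SCNet

/-- The derivative of `totalCost` at `(φ,t)`, applied to the link flows and workloads of
`(ψ,s)`. -/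
noncomputable def linearizedCost (N : SCNet V A) (φ : V → Option V → A → ℕ → ℝ)
    (t : V → A → ℕ → ℝ) (ψ : V → Option V → A → ℕ → ℝ) (s : V → A → ℕ → ℝ) : ℝ :=
  (∑ i, ∑ j, N.D' i j (linkFlow N φ t i j) * linkFlow N ψ s i j)
    + ∑ i, N.C' i (workload N φ t i) * workload N ψ s i

section

variable {N : SCNet V A} {r : V → A → ℝ} {φ ψ : V → Option V → A → ℕ → ℝ}
  {t s lam : V → A → ℕ → ℝ}

namespace IsStrategy

theorem linkFlow_nonneg (hψ : IsStrategy N ψ) (hs : ∀ i a k, 0 ≤ s i a k) (i j : V) :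
    0 ≤ linkFlow N ψ s i j :=
  Finset.sum_nonneg fun a _ => Finset.sum_nonneg fun k hk =>
    mul_nonneg (N.hL a k (Nat.lt_succ_iff.mp (Finset.mem_range.mp hk))).le
      (mul_nonneg (hs i a k) (hψ.nonneg i (some j) a k))

theorem workload_nonneg (hψ : IsStrategy N ψ) (hs : ∀ i a k, 0 ≤ s i a k) (i : V) :
    0 ≤ workload N ψ s i :=
  Finset.sum_nonneg fun a _ => Finset.sum_nonneg fun k hk =>
    mul_nonneg (N.hw i a k (Nat.lt_succ_iff.mp (Finset.mem_range.mp hk))).le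
      (mul_nonneg (hs i a k) (hψ.nonneg i none a k))

theorem linkFlow_eq_zero (hψ : IsStrategy N ψ) {i j : V} (h : ¬ N.E i j) (s : V → A → ℕ → ℝ) :
    linkFlow N ψ s i j = 0 :=
  Finset.sum_eq_zero fun a _ => Finset.sum_eq_zero fun k _ => by simp [hψ.no_edge i j a k h]

theorem eq_zero_at_dest (hψ : IsStrategy N ψ) (a : A) (j : Option V) :
    ψ (N.dest a) j a (N.K a) = 0 := by
  have hsum : ∑ j : Option V, ψ (N.dest a) j a (N.K a) = 0 := by
    rw [Fintype.sum_option]; exact hψ.sum_dest a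
  exact (Finset.sum_eq_zero_iff_of_nonneg fun j _ => hψ.nonneg _ j a _).mp hsum j
    (Finset.mem_univ j)

theorem sum_eq_one (hψ : IsStrategy N ψ) {i : V} {a : A} {k : ℕ} (hk : k ≤ N.K a)
    (hne : ¬(i = N.dest a ∧ k = N.K a)) : ∑ j : Option V, ψ i j a k = 1 := by
  rw [Fintype.sum_option]; exact hψ.sum_one i a k hk hne

theorem admissible_of_pos (hψ : IsStrategy N ψ) {i : V} {a : A} {k : ℕ} {j : Option V}
    (hk : k ≤ N.K a) (hpos : 0 < ψ i j a k) : Admissible N i a k j := by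
  cases j with
  | none =>
    refine hk.lt_of_ne ?_
    rintro rfl
    exact hpos.ne' (hψ.cpu_last i a)
  | some j =>
    by_contra hE
    exact hpos.ne' (hψ.no_edge i j a k hE)

end IsStrategy

theorem IsMarginal.eq_sum_mul_mdelta (hlam : IsMarginal N φ t lam) (hφ : IsStrategy N φ)
    {i : V} {a : A} {k : ℕ} (hk : k ≤ N.K a) :
    lam i a k = ∑ j, φ i j a k * mdelta N φ t lam i a k j := by
  rw [Fintype.sum_option]
  rcases hk.lt_or_eq with hk | rfl
  · rw [hlam.step i a k hk, add_comm]; rfl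
  · rw [hlam.last i a, hφ.cpu_last i a, zero_mul, zero_add]; rfl

theorem IsMarginal.dest_eq_zero (hlam : IsMarginal N φ t lam) (hφ : IsStrategy N φ) (a : A) :
    lam (N.dest a) a (N.K a) = 0 := by
  simp [hlam.eq_sum_mul_mdelta hφ le_rfl, hφ.eq_zero_at_dest]

namespace SuffCond

theorem le_mdelta (hsuff : SuffCond N φ t lam) (hlam : IsMarginal N φ t lam)
    (hφ : IsStrategy N φ) {i : V} {a : A} {k : ℕ} (hk : k ≤ N.K a)
    (hne : ¬(i = N.dest a ∧ k = N.K a)) {j : Option V} (hj : Admissible N i a k j) :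
    lam i a k ≤ mdelta N φ t lam i a k j :=
  calc lam i a k = ∑ j', φ i j' a k * mdelta N φ t lam i a k j' := hlam.eq_sum_mul_mdelta hφ hk
    _ ≤ ∑ j', φ i j' a k * mdelta N φ t lam i a k j :=
      Finset.sum_le_sum fun j' _ => mul_le_mul_of_nonneg_of_pos_imp (hφ.nonneg i j' a k)
        fun hpos => hsuff i a k hk j' (hφ.admissible_of_pos hk hpos) hpos j hj
    _ = mdelta N φ t lam i a k j := by rw [← Finset.sum_mul, hφ.sum_eq_one hk hne, one_mul]

theorem le_sum_mul_mdelta (hsuff : SuffCond N φ t lam) (hlam : IsMarginal N φ t lam)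
    (hφ : IsStrategy N φ) (hψ : IsStrategy N ψ) {i : V} {a : A} {k : ℕ} (hk : k ≤ N.K a) :
    lam i a k ≤ ∑ j, ψ i j a k * mdelta N φ t lam i a k j := by
  by_cases hne : i = N.dest a ∧ k = N.K a
  · obtain ⟨rfl, rfl⟩ := hne
    simp [hlam.dest_eq_zero hφ, hψ.eq_zero_at_dest]
  calc lam i a k = ∑ j, ψ i j a k * lam i a k := by
        rw [← Finset.sum_mul, hψ.sum_eq_one hk hne, one_mul]
    _ ≤ ∑ j, ψ i j a k * mdelta N φ t lam i a k j :=
      Finset.sum_le_sum fun j _ => mul_le_mul_of_nonneg_of_pos_imp (hψ.nonneg i j a k)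
        fun hpos => hsuff.le_mdelta hlam hφ hk hne (hψ.admissible_of_pos hk hpos)

end SuffCond

theorem sum_mul_linkFlow (N : SCNet V A) (ψ : V → Option V → A → ℕ → ℝ) (s : V → A → ℕ → ℝ)
    (c : V → V → ℝ) :
    ∑ i, ∑ j, c i j * linkFlow N ψ s i j
      = N.stageSum fun i a k => s i a k * ∑ j, ψ i (some j) a k * (N.L a k * c i j) := by
  simp only [linkFlow, SCNet.stageSum, Finset.mul_sum, Finset.sum_comm_dependent Finset.univ]
  ac_rfl

theorem sum_mul_workload (N : SCNet V A) (ψ : V → Option V → A → ℕ → ℝ) (s : V → A → ℕ → ℝ)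
    (c : V → ℝ) :
    ∑ i, c i * workload N ψ s i
      = N.stageSum fun i a k => s i a k * (ψ i none a k * (N.w i a k * c i)) := by
  simp only [workload, SCNet.stageSum, Finset.mul_sum, Finset.sum_comm_dependent Finset.univ]
  ac_rfl

theorem IsTraffic.stageSum_mul_next (hs : IsTraffic N r ψ s) (hψ : IsStrategy N ψ)
    (lam : V → A → ℕ → ℝ) :
    N.stageSum (fun i a k => s i a k *
        (∑ j, ψ i (some j) a k * lam j a k + ψ i none a k * lam i a (k + 1)))
      = N.stageSum (fun i a k => s i a k * lam i a k) - ∑ a, ∑ i, r i a * lam i a 0 := by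
  simp only [SCNet.stageSum, ← Finset.sum_sub_distrib]
  refine Finset.sum_congr rfl fun a _ => ?_
  have hinflow : ∀ k, ∑ i, s i a k * ∑ j, ψ i (some j) a k * lam j a k
      = ∑ i, (∑ j, s j a k * ψ j (some i) a k) * lam i a k := fun k => by
    simp only [Finset.mul_sum, Finset.sum_mul]
    rw [Finset.sum_comm]
    simp only [mul_assoc]
  calc ∑ k ∈ Finset.range (N.K a + 1), ∑ i, s i a k *
        (∑ j, ψ i (some j) a k * lam j a k + ψ i none a k * lam i a (k + 1))
      = ∑ i, ∑ k ∈ Finset.range (N.K a + 1), ((∑ j, s j a k * ψ j (some i) a k) * lam i a k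
          + s i a k * ψ i none a k * lam i a (k + 1)) := by
        simp only [mul_add, Finset.sum_add_distrib, hinflow, mul_assoc]
        congr 1 <;> exact Finset.sum_comm
    _ = ∑ i, (∑ k ∈ Finset.range (N.K a + 1), s i a k * lam i a k - r i a * lam i a 0) :=
        Finset.sum_congr rfl fun i _ => sum_range_inflow_add_carry_mul _ _ _ _ _ _
          (hs.base i a) (fun k hk => by simpa using hs.step i a (k + 1) k.succ_pos hk)
          (by simp [hψ.cpu_last i a])
    _ = _ := by rw [Finset.sum_sub_distrib, Finset.sum_comm]

theorem IsTraffic.stageSum_mul_sum_mul_mdelta (hs : IsTraffic N r ψ s) (hψ : IsStrategy N ψ)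
    (φ : V → Option V → A → ℕ → ℝ) (t lam : V → A → ℕ → ℝ) :
    N.stageSum (fun i a k => s i a k * ∑ j, ψ i j a k * mdelta N φ t lam i a k j)
      = linearizedCost N φ t ψ s + N.stageSum (fun i a k => s i a k * lam i a k)
        - ∑ a, ∑ i, r i a * lam i a 0 := by
  rw [add_sub_assoc, ← hs.stageSum_mul_next hψ, linearizedCost, sum_mul_linkFlow,
    sum_mul_workload, ← SCNet.stageSum_add, ← SCNet.stageSum_add]
  refine SCNet.stageSum_congr fun i a k _ => ?_
  simp only [Fintype.sum_option, mdelta, mul_add, Finset.sum_add_distrib]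
  ring

theorem IsMarginal.linearizedCost_eq (hlam : IsMarginal N φ t lam) (hφ : IsStrategy N φ)
    (ht : IsTraffic N r φ t) :
    linearizedCost N φ t φ t = ∑ a, ∑ i, r i a * lam i a 0 := by
  have heq : N.stageSum (fun i a k => t i a k * ∑ j, φ i j a k * mdelta N φ t lam i a k j)
      = N.stageSum (fun i a k => t i a k * lam i a k) :=
    SCNet.stageSum_congr fun i a k hk => by rw [← hlam.eq_sum_mul_mdelta hφ hk]
  linarith [ht.stageSum_mul_sum_mul_mdelta hφ φ t lam]

theorem SuffCond.le_linearizedCost (hsuff : SuffCond N φ t lam) (hlam : IsMarginal N φ t lam)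
    (hφ : IsStrategy N φ) (hψ : IsStrategy N ψ) (hs : IsTraffic N r ψ s) :
    ∑ a, ∑ i, r i a * lam i a 0 ≤ linearizedCost N φ t ψ s := by
  have hle : N.stageSum (fun i a k => s i a k * lam i a k)
      ≤ N.stageSum (fun i a k => s i a k * ∑ j, ψ i j a k * mdelta N φ t lam i a k j) :=
    SCNet.stageSum_le_stageSum fun i a k hk =>
      mul_le_mul_of_nonneg_left (hsuff.le_sum_mul_mdelta hlam hφ hψ hk) (hs.nonneg i a k)
  linarith [hs.stageSum_mul_sum_mul_mdelta hψ φ t lam]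

theorem totalCost_add_linearizedCost_sub_le (hφ : IsStrategy N φ) (ht : ∀ i a k, 0 ≤ t i a k)
    (hψ : IsStrategy N ψ) (hs : ∀ i a k, 0 ≤ s i a k) :
    totalCost N φ t + (linearizedCost N φ t ψ s - linearizedCost N φ t φ t)
      ≤ totalCost N ψ s := by
  have hlink : ∀ i j, (if N.E i j then N.D i j (linkFlow N φ t i j) else 0)
      + N.D' i j (linkFlow N φ t i j) * (linkFlow N ψ s i j - linkFlow N φ t i j)
      ≤ if N.E i j then N.D i j (linkFlow N ψ s i j) else 0 := fun i j => by
    by_cases hE : N.E i j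
    · have hF := hφ.linkFlow_nonneg ht i j
      simpa only [if_pos hE] using (N.hD_conv i j hE).add_mul_sub_le_of_hasDerivWithinAt hF
        (hψ.linkFlow_nonneg hs i j) (N.hD_deriv i j hE _ hF)
    · simp [hE, hφ.linkFlow_eq_zero hE, hψ.linkFlow_eq_zero hE]
  have hnode : ∀ i, N.C i (workload N φ t i)
      + N.C' i (workload N φ t i) * (workload N ψ s i - workload N φ t i)
      ≤ N.C i (workload N ψ s i) := fun i =>
    (N.hC_conv i).add_mul_sub_le_of_hasDerivWithinAt (hφ.workload_nonneg ht i)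
      (hψ.workload_nonneg hs i) (N.hC_deriv i _ (hφ.workload_nonneg ht i))
  calc totalCost N φ t + (linearizedCost N φ t ψ s - linearizedCost N φ t φ t)
      = (∑ i, ∑ j, ((if N.E i j then N.D i j (linkFlow N φ t i j) else 0)
          + N.D' i j (linkFlow N φ t i j) * (linkFlow N ψ s i j - linkFlow N φ t i j)))
        + ∑ i, (N.C i (workload N φ t i)
          + N.C' i (workload N φ t i) * (workload N ψ s i - workload N φ t i)) := by
        simp only [totalCost, linearizedCost, mul_sub, Finset.sum_add_distrib,
          Finset.sum_sub_distrib]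
        ring
    _ ≤ totalCost N ψ s :=
        add_le_add (Finset.sum_le_sum fun i _ => Finset.sum_le_sum fun j _ => hlink i j)
          (Finset.sum_le_sum fun i _ => hnode i)

end

theorem sufficient_optimality_service_chain_general
    (N : SCNet V A) (r : V → A → ℝ)
    (φ : V → Option V → A → ℕ → ℝ) (t : V → A → ℕ → ℝ) (lam : V → A → ℕ → ℝ)
    (hfeas : Feasible N r φ t) (hlam : IsMarginal N φ t lam)
    (hsuff : SuffCond N φ t lam) :
    ∀ (φ' : V → Option V → A → ℕ → ℝ) (t' : V → A → ℕ → ℝ),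
      Feasible N r φ' t' → totalCost N φ t ≤ totalCost N φ' t' := by
  rintro φ' t' ⟨hφ', ht'⟩
  obtain ⟨hφ, ht⟩ := hfeas
  have hconv := totalCost_add_linearizedCost_sub_le hφ ht.nonneg hφ' ht'.nonneg
  have heq := hlam.linearizedCost_eq hφ ht
  have hle := hsuff.le_linearizedCost hlam hφ hφ' ht'
  linarith

/-- **Theorem 2 (Sufficient optimality condition for service-chain forwarding and
offloading).** If `(φ,t)` is feasible for `r` and some marginal vector `λ` for
`(φ,t)` satisfies the sufficient-optimality condition, then `(φ,t)` is a global
optimum of the total-cost minimization problem. -/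
theorem sufficient_optimality_service_chain
    (N : SCNet V A) (r : V → A → ℝ) (hr : ∀ i a, 0 ≤ r i a)
    (φ : V → Option V → A → ℕ → ℝ) (t : V → A → ℕ → ℝ) (lam : V → A → ℕ → ℝ)
    (hfeas : Feasible N r φ t) (hlam : IsMarginal N φ t lam)
    (hsuff : SuffCond N φ t lam) :
    ∀ (φ' : V → Option V → A → ℕ → ℝ) (t' : V → A → ℕ → ℝ),
      Feasible N r φ' t' → totalCost N φ t ≤ totalCost N φ' t' :=
  sufficient_optimality_service_chain_general N r φ t lam hfeas hlam hsuff
end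

section
/- Euler-type marginal-cost identity (equation (proof:SuffCond7) in the proof of Theorem 2): In the service-chain model, let (φ,t) be feasible for r and let λ be any marginal vector for (φ,t). Then Σ_{(i,j)∈E} D'_{ij}(F_{ij})·F_{ij} + Σ_{i∈V} C'_i(G_i)·G_i = Σ_{i∈V} Σ_{a∈A} λ_i(a,0)·r_i(a). -/
open scoped BigOperators
open Classical

variable {V A : Type} [Fintype V] [DecidableEq V] [Fintype A]

/-
Multiply the marginal recursion at stage `(a,k)` by the traffic `t_i(a,k)` and sum over
the nodes. By flow conservation the terms `f_{ij}(a,k) λ_j(a,k)` cancel against the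
traffic entering each node from its neighbours, so the marginals weighted by the fresh
input of stage `k` (exogenous input for `k = 0`, CPU output of stage `k - 1` otherwise)
equal the marginal cost spent at stage `k` plus the same quantity for stage `k + 1`.
Nothing enters stage `K_a + 1`, so the sum telescopes, and regrouping the marginal costs
by link and by node gives `Σ D'_{ij} F_{ij} + Σ C'_i G_i`.
-/

theorem Finset.eq_sum_range_of_eq_add_succ {M : Type*} [AddCommGroup M] {s e : ℕ → M}
    {n : ℕ} (hs : ∀ k < n, s k = e k + s (k + 1)) (hn : s n = 0) :
    s 0 = ∑ k ∈ Finset.range n, e k := by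
  rw [← sub_zero (s 0), ← hn, ← Finset.sum_range_sub']
  refine Finset.sum_congr rfl fun k hk => ?_
  rw [hs k (Finset.mem_range.mp hk), add_sub_cancel_right]

theorem sum_costToGo_mul_source {ι R : Type*} [Fintype ι] [CommRing R]
    (P c : ι → ι → R) (t s lam o : ι → R)
    (ht : ∀ i, t i = ∑ j, t j * P j i + s i)
    (hlam : ∀ i, lam i = ∑ j, P i j * (c i j + lam j) + o i) :
    ∑ i, lam i * s i = ∑ i, ∑ j, t i * P i j * c i j + ∑ i, t i * o i := by
  have hflow : ∑ i, ∑ j, t i * P i j * lam j = ∑ i, lam i * ∑ j, t j * P j i := by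
    rw [Finset.sum_comm]
    simp only [Finset.mul_sum, mul_comm]
  have hpair : ∑ i, lam i * t i
      = ∑ i, ∑ j, t i * P i j * c i j + ∑ i, ∑ j, t i * P i j * lam j
        + ∑ i, t i * o i := by
    simp only [← Finset.sum_add_distrib]
    refine Finset.sum_congr rfl fun i _ => ?_
    rw [hlam i, add_mul, Finset.sum_mul]
    congr 1
    · exact Finset.sum_congr rfl fun j _ => by ring
    · ring
  have hsplit : ∑ i, lam i * t i = ∑ i, lam i * ∑ j, t j * P j i + ∑ i, lam i * s i := by
    rw [← Finset.sum_add_distrib]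
    exact Finset.sum_congr rfl fun i _ => by rw [← mul_add, ← ht i]
  rw [hflow] at hpair
  linear_combination hsplit.symm.trans hpair

section Stage

variable (N : SCNet V A) (r : V → A → ℝ) (φ : V → Option V → A → ℕ → ℝ)
  (t : V → A → ℕ → ℝ) (lam : V → A → ℕ → ℝ)

noncomputable def stageInput (i : V) (a : A) : ℕ → ℝ
  | 0 => r i a
  | k + 1 => t i a k * φ i none a k

noncomputable def stageLinkCost (a : A) (k : ℕ) : ℝ :=
  ∑ i, ∑ j, t i a k * φ i (some j) a k * (N.L a k * N.D' i j (linkFlow N φ t i j))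

noncomputable def stageCpuCost (a : A) (k : ℕ) : ℝ :=
  ∑ i, t i a k * φ i none a k * (N.w i a k * N.C' i (workload N φ t i))

variable {N r φ t lam}

theorem IsTraffic.eq_inflow_add_stageInput (ht : IsTraffic N r φ t) {a : A} {k : ℕ}
    (hk : k ≤ N.K a) (i : V) :
    t i a k = ∑ j, t j a k * φ j (some i) a k + stageInput r φ t i a k := by
  cases k with
  | zero => rw [ht.base, stageInput, add_comm]
  | succ k => exact ht.step i a (k + 1) (Nat.le_add_left 1 k) hk

theorem IsMarginal.eq_of_le (hφ : IsStrategy N φ) (hlam : IsMarginal N φ t lam)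
    {a : A} {k : ℕ} (hk : k ≤ N.K a) (i : V) :
    lam i a k
      = ∑ j, φ i (some j) a k * (N.L a k * N.D' i j (linkFlow N φ t i j) + lam j a k)
        + φ i none a k * (N.w i a k * N.C' i (workload N φ t i) + lam i a (k + 1)) := by
  rcases hk.lt_or_eq with hk | rfl
  · exact hlam.step i a k hk
  · rw [hφ.cpu_last, zero_mul, add_zero]
    exact hlam.last i a

theorem IsStrategy.stageInput_eq_zero (hφ : IsStrategy N φ) (i : V) (a : A) :
    stageInput r φ t i a (N.K a + 1) = 0 := by
  rw [stageInput, hφ.cpu_last, mul_zero]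

theorem marginal_stageInput_balance (hφ : IsStrategy N φ) (ht : IsTraffic N r φ t)
    (hlam : IsMarginal N φ t lam) {a : A} {k : ℕ} (hk : k ≤ N.K a) :
    ∑ i, lam i a k * stageInput r φ t i a k
      = stageLinkCost N φ t a k + stageCpuCost N φ t a k
        + ∑ i, lam i a (k + 1) * stageInput r φ t i a (k + 1) := by
  rw [sum_costToGo_mul_source _ _ _ _ _ _ (ht.eq_inflow_add_stageInput hk)
    (hlam.eq_of_le hφ hk), add_assoc (stageLinkCost N φ t a k)]
  congr 1
  rw [stageCpuCost, ← Finset.sum_add_distrib]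
  exact Finset.sum_congr rfl fun i _ => by simp only [stageInput]; ring

theorem sum_marginal_mul_input_eq_sum_stageCost (hφ : IsStrategy N φ)
    (ht : IsTraffic N r φ t) (hlam : IsMarginal N φ t lam) (a : A) :
    ∑ i, lam i a 0 * r i a
      = ∑ k ∈ Finset.range (N.K a + 1), (stageLinkCost N φ t a k + stageCpuCost N φ t a k) :=
  Finset.eq_sum_range_of_eq_add_succ (s := fun k => ∑ i, lam i a k * stageInput r φ t i a k)
    (fun _ hk => marginal_stageInput_balance hφ ht hlam (Nat.lt_succ_iff.mp hk))
    (by simp only [hφ.stageInput_eq_zero, mul_zero, Finset.sum_const_zero])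

theorem IsStrategy.linkFlow_eq_zero_s11 (hφ : IsStrategy N φ) {i j : V} (hij : ¬ N.E i j) :
    linkFlow N φ t i j = 0 := by
  simp [linkFlow, hφ.no_edge i j _ _ hij]

theorem sum_stageLinkCost (hφ : IsStrategy N φ) :
    ∑ a, ∑ k ∈ Finset.range (N.K a + 1), stageLinkCost N φ t a k
      = ∑ i, ∑ j, if N.E i j then
          N.D' i j (linkFlow N φ t i j) * linkFlow N φ t i j else 0 := by
  have hnonEdge : ∀ i j, (if N.E i j then N.D' i j (linkFlow N φ t i j) * linkFlow N φ t i j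
      else 0) = N.D' i j (linkFlow N φ t i j) * linkFlow N φ t i j := fun i j => by
    split_ifs with hij
    · rfl
    · rw [hφ.linkFlow_eq_zero_s11 hij, mul_zero]
  calc ∑ a, ∑ k ∈ Finset.range (N.K a + 1), stageLinkCost N φ t a k
      = ∑ a, ∑ i, ∑ j, ∑ k ∈ Finset.range (N.K a + 1),
          t i a k * φ i (some j) a k * (N.L a k * N.D' i j (linkFlow N φ t i j)) :=
        Finset.sum_congr rfl fun a _ => by
          simp only [stageLinkCost]
          rw [Finset.sum_comm]
          exact Finset.sum_congr rfl fun i _ => Finset.sum_comm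
    _ = ∑ i, ∑ j, ∑ a, ∑ k ∈ Finset.range (N.K a + 1),
          t i a k * φ i (some j) a k * (N.L a k * N.D' i j (linkFlow N φ t i j)) := by
        rw [Finset.sum_comm]
        exact Finset.sum_congr rfl fun i _ => Finset.sum_comm
    _ = _ := Finset.sum_congr rfl fun i _ => Finset.sum_congr rfl fun j _ => by
        rw [hnonEdge, linkFlow, Finset.mul_sum]
        refine Finset.sum_congr rfl fun a _ => ?_
        rw [Finset.mul_sum]
        exact Finset.sum_congr rfl fun k _ => by ring

theorem sum_stageCpuCost :
    ∑ a, ∑ k ∈ Finset.range (N.K a + 1), stageCpuCost N φ t a k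
      = ∑ i, N.C' i (workload N φ t i) * workload N φ t i := by
  calc ∑ a, ∑ k ∈ Finset.range (N.K a + 1), stageCpuCost N φ t a k
      = ∑ a, ∑ i, ∑ k ∈ Finset.range (N.K a + 1),
          t i a k * φ i none a k * (N.w i a k * N.C' i (workload N φ t i)) :=
        Finset.sum_congr rfl fun a _ => by
          simp only [stageCpuCost]
          exact Finset.sum_comm
    _ = _ := by
        rw [Finset.sum_comm]
        refine Finset.sum_congr rfl fun i _ => ?_
        rw [workload, Finset.mul_sum]
        refine Finset.sum_congr rfl fun a _ => ?_
        rw [Finset.mul_sum]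
        exact Finset.sum_congr rfl fun k _ => by ring

end Stage

theorem euler_marginal_identity_general
    (N : SCNet V A) (r : V → A → ℝ)
    (φ : V → Option V → A → ℕ → ℝ) (t : V → A → ℕ → ℝ) (lam : V → A → ℕ → ℝ)
    (hfeas : Feasible N r φ t) (hlam : IsMarginal N φ t lam) :
    (∑ i, ∑ j, if N.E i j then
        N.D' i j (linkFlow N φ t i j) * linkFlow N φ t i j else 0)
      + (∑ i, N.C' i (workload N φ t i) * workload N φ t i)
    = ∑ i, ∑ a, lam i a 0 * r i a := by
  obtain ⟨hφ, ht⟩ := hfeas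
  rw [← sum_stageLinkCost hφ, ← sum_stageCpuCost, ← Finset.sum_add_distrib, Finset.sum_comm]
  simp only [sum_marginal_mul_input_eq_sum_stageCost hφ ht hlam, Finset.sum_add_distrib]

/-- **Euler-type marginal-cost identity.** For any feasible pair `(φ,t)` and any
marginal vector `λ` for it,
`Σ_{(i,j)∈E} D'_{ij}(F_{ij})·F_{ij} + Σ_i C'_i(G_i)·G_i = Σ_i Σ_a λ_i(a,0)·r_i(a)`. -/
theorem euler_marginal_identity
    (N : SCNet V A) (r : V → A → ℝ) (hr : ∀ i a, 0 ≤ r i a)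
    (φ : V → Option V → A → ℕ → ℝ) (t : V → A → ℕ → ℝ) (lam : V → A → ℕ → ℝ)
    (hfeas : Feasible N r φ t) (hlam : IsMarginal N φ t lam) :
    (∑ i, ∑ j, if N.E i j then
        N.D' i j (linkFlow N φ t i j) * linkFlow N φ t i j else 0)
      + (∑ i, N.C' i (workload N φ t i) * workload N φ t i)
    = ∑ i, ∑ a, lam i a 0 * r i a :=
  euler_marginal_identity_general N r φ t lam hfeas hlam
end

section
/- Existence and uniqueness of the marginal vector for loop-free strategies: In the service-chain model, call a forwarding strategy φ loop-free if for every stage (a,k) there is no cycle of nodes i₁, i₂, …, i_L, i₁ in V with φ_{i_l i_{l+1}}(a,k) > 0 for every consecutive pair (indices cyclic). If (φ,t) is feasible for r and φ is loop-free, then there exists exactly one marginal vector λ for (φ,t), i.e. exactly one solution of the recursion λ_i(a,k) = Σ_{j∈V} φ_{ij}(a,k)(L(a,k) D'_{ij}(F_{ij}) + λ_j(a,k)) + φ_{i0}(a,k)(w_i(a,k) C'_i(G_i) + λ_i(a,k+1)) for k < K_a, together with λ_i(a,K_a) = Σ_{j∈V} φ_{ij}(a,K_a)(L(a,K_a) D'_{ij}(F_{ij})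 + λ_j(a,K_a)). -/
open scoped BigOperators
open Classical

variable {V A : Type} [Fintype V] [DecidableEq V] [Fintype A]

/-- A strategy is loop-free if for every stage `(a,k)` there is no cycle of nodes
along which the forwarding fractions of that stage are all strictly positive. -/
def LoopFree (N : SCNet V A) (φ : V → Option V → A → ℕ → ℝ) : Prop :=
  ∀ a k, k ≤ N.K a → ∀ (len : ℕ), 1 ≤ len → ∀ c : ℕ → V, c len = c 0 →
    ¬ (∀ l < len, 0 < φ (c l) (some (c (l + 1))) a k)

/-!
At a fixed stage `(a,k)` the marginal recursion reads `λ = M λ + c`, where `M i j = φ_{ij}(a,k)`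
and `c` involves only the link/CPU derivatives and the stage-`(k+1)` marginals. Loop-freedom
says the nonzero entries of the nonnegative matrix `M` form no cycle, so `M` is nilpotent and
`1 - M` is invertible: each stage is uniquely solvable once the next one is known. Since
`φ_{i0}(a,K_a) = 0`, the last stage needs no successor, and the stages are solved backwards
from `k = K_a`.
-/

theorem Fintype.exists_lt_le_card_map_eq {n : Type*} [Fintype n] (c : ℕ → n) :
    ∃ p q, p < q ∧ q ≤ Fintype.card n ∧ c p = c q := by
  obtain ⟨x, y, hxy, hc⟩ := Fintype.exists_ne_map_eq_of_card_lt
    (fun l : Fin (Fintype.card n + 1) => c l) (by simp)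
  rcases (Fin.val_injective.ne hxy).lt_or_gt with h | h
  · exact ⟨x, y, h, Nat.lt_succ_iff.mp y.isLt, hc⟩
  · exact ⟨y, x, h, Nat.lt_succ_iff.mp x.isLt, hc.symm⟩

namespace Matrix

variable {n R : Type*} [Fintype n] [DecidableEq n]

theorem exists_chain_of_pow_apply_ne_zero [Semiring R] {M : Matrix n n R} {m : ℕ} {i j : n}
    (h : (M ^ m) i j ≠ 0) :
    ∃ c : ℕ → n, c 0 = i ∧ c m = j ∧ ∀ l < m, M (c l) (c (l + 1)) ≠ 0 := by
  induction m generalizing j with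
  | zero =>
    obtain rfl : i = j := by
      by_contra hij
      exact h (by simp [hij])
    exact ⟨fun _ => i, rfl, rfl, fun l hl => absurd hl l.not_lt_zero⟩
  | succ m ih =>
    rw [pow_succ, mul_apply] at h
    obtain ⟨x, -, hx⟩ := Finset.exists_ne_zero_of_sum_ne_zero h
    obtain ⟨c, hc0, hcm, hc⟩ := ih (left_ne_zero_of_mul hx)
    refine ⟨Function.update c (m + 1) j, by simp [hc0], by simp, fun l hl => ?_⟩
    rcases Nat.lt_succ_iff_lt_or_eq.mp hl with hl | rfl
    · rw [Function.update_of_ne (by omega), Function.update_of_ne (by omega)]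
      exact hc l hl
    · simpa [hcm] using right_ne_zero_of_mul hx

-- A nonzero entry of `M ^ card n` gives a walk through `card n + 1` vertices, which must
-- revisit one of them.
theorem isNilpotent_of_forall_cycle [Semiring R] {M : Matrix n n R}
    (hM : ∀ len, 1 ≤ len → ∀ c : ℕ → n, c len = c 0 → ∃ l < len, M (c l) (c (l + 1)) = 0) :
    IsNilpotent M := by
  refine ⟨Fintype.card n, Matrix.ext fun i j => ?_⟩
  by_contra h
  obtain ⟨c, -, -, hc⟩ := exists_chain_of_pow_apply_ne_zero h
  obtain ⟨p, q, hpq, hq, hcpq⟩ := Fintype.exists_lt_le_card_map_eq c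
  obtain ⟨l, hl, hzero⟩ := hM (q - p) (by omega) (fun l => c (p + l))
    (by simp [Nat.add_sub_cancel' hpq.le, hcpq])
  exact hc (p + l) (by omega) (by simpa only [add_assoc] using hzero)

theorem existsUnique_eq_mulVec_add [CommRing R] {M : Matrix n n R} (hM : IsNilpotent M)
    (c : n → R) : ∃! x, x = M *ᵥ x + c := by
  have hunit := hM.isUnit_one_sub
  have hbij : Function.Bijective (1 - M).mulVec :=
    ⟨mulVec_injective_of_isUnit hunit, mulVec_surjective_iff_isUnit.mpr hunit⟩
  have hiff : ∀ x, x = M *ᵥ x + c ↔ (1 - M) *ᵥ x = c := fun x => by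
    rw [sub_mulVec, one_mulVec, sub_eq_iff_eq_add']
  simpa only [hiff] using hbij.existsUnique c

end Matrix

open scoped Matrix

theorem exists_backward_solution_of_existsUnique {X : Type*} {K : ℕ} {Q : X → Prop}
    {P : ℕ → X → X → Prop} (hQ : ∃! x, Q x) (hP : ∀ k < K, ∀ y, ∃! x, P k y x) :
    ∃ s : ℕ → X, (Q (s K) ∧ ∀ k < K, P k (s (k + 1)) (s k)) ∧
      ∀ s' : ℕ → X, Q (s' K) → (∀ k < K, P k (s' (k + 1)) (s' k)) → ∀ k ≤ K, s' k = s k := by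
  obtain ⟨xK, hxK, hxK_unique⟩ := hQ
  choose! f hf hf_unique using hP
  -- `g m` is the solution at time `K - m`.
  let g : ℕ → X := fun m => Nat.rec xK (fun m y => f (K - (m + 1)) y) m
  have hg : ∀ k < K, g (K - k) = f k (g (K - (k + 1))) := fun k hk => by
    rw [show K - k = K - (k + 1) + 1 by omega]
    change f (K - (K - (k + 1) + 1)) _ = _
    rw [show K - (K - (k + 1) + 1) = k by omega]
  refine ⟨fun k => g (K - k), ⟨by simpa [g] using hxK, fun k hk => ?_⟩, ?_⟩
  · change P k (g (K - (k + 1))) (g (K - k))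
    rw [hg k hk]
    exact hf k hk _
  · intro s' hs'K hs' k hk
    refine Nat.decreasingInduction (motive := fun k _ => s' k = g (K - k))
      (fun k hk ih => ?_) (by simpa [g] using hxK_unique _ hs'K) hk
    rw [hf_unique k hk _ _ (hs' k hk), ih, hg k hk]

section Marginal

variable (N : SCNet V A) (φ : V → Option V → A → ℕ → ℝ) (t : V → A → ℕ → ℝ)

def stageMatrix (a : A) (k : ℕ) : Matrix V V ℝ :=
  Matrix.of fun i j => φ i (some j) a k

noncomputable def stageOffset (a : A) (k : ℕ) (next : V → ℝ) : V → ℝ := fun i =>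
  (∑ j, φ i (some j) a k * (N.L a k * N.D' i j (linkFlow N φ t i j)))
    + φ i none a k * (N.w i a k * N.C' i (workload N φ t i) + next i)

variable {N φ}

theorem stageMatrix_isNilpotent (hφ : ∀ i j a k, 0 ≤ φ i j a k) (hlf : LoopFree N φ) {a : A} {k : ℕ}
    (hk : k ≤ N.K a) : IsNilpotent (stageMatrix φ a k) :=
  Matrix.isNilpotent_of_forall_cycle fun len hlen c hc => by
    by_contra! h
    exact hlf a k hk len hlen c hc fun l hl => (hφ _ _ a k).lt_of_ne' (h l hl)

theorem marginal_rhs_eq_stage (a : A) (k : ℕ) (x next : V → ℝ) (i : V) :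
    (∑ j, φ i (some j) a k * (N.L a k * N.D' i j (linkFlow N φ t i j) + x j))
      + φ i none a k * (N.w i a k * N.C' i (workload N φ t i) + next i)
      = (stageMatrix φ a k *ᵥ x + stageOffset N φ t a k next) i := by
  simp only [Pi.add_apply, Matrix.mulVec, dotProduct, stageMatrix, stageOffset, Matrix.of_apply,
    mul_add, Finset.sum_add_distrib]
  ring

theorem isMarginal_iff_stage (hcpu : ∀ i a, φ i none a (N.K a) = 0) {lam : V → A → ℕ → ℝ} :
    IsMarginal N φ t lam ↔ ∀ a,
      (fun i => lam i a (N.K a)) = stageMatrix φ a (N.K a) *ᵥ (fun i => lam i a (N.K a))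
        + stageOffset N φ t a (N.K a) 0 ∧
      ∀ k < N.K a, (fun i => lam i a k) = stageMatrix φ a k *ᵥ (fun i => lam i a k)
        + stageOffset N φ t a k (fun i => lam i a (k + 1)) := by
  have hlast : ∀ i a, (∑ j, φ i (some j) a (N.K a) *
      (N.L a (N.K a) * N.D' i j (linkFlow N φ t i j) + lam j a (N.K a)))
      = (stageMatrix φ a (N.K a) *ᵥ (fun i => lam i a (N.K a))
        + stageOffset N φ t a (N.K a) 0) i := fun i a => by
    rw [← marginal_rhs_eq_stage, hcpu, zero_mul, add_zero]
  simp only [funext_iff, ← hlast, ← marginal_rhs_eq_stage]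
  exact ⟨fun h a => ⟨fun i => h.last i a, fun k hk i => h.step i a k hk⟩,
    fun h => ⟨fun i a => (h a).1 i, fun i a k hk => (h a).2 k hk i⟩⟩

end Marginal

theorem marginal_exists_unique_of_loopFree_general
    (N : SCNet V A) (r : V → A → ℝ)
    (φ : V → Option V → A → ℕ → ℝ) (t : V → A → ℕ → ℝ)
    (hfeas : Feasible N r φ t) (hlf : LoopFree N φ) :
    ∃ lam : V → A → ℕ → ℝ, IsMarginal N φ t lam ∧
      ∀ lam' : V → A → ℕ → ℝ, IsMarginal N φ t lam' →
        ∀ i a k, k ≤ N.K a → lam' i a k = lam i a k := by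
  have hφ : IsStrategy N φ := hfeas.1
  have hstage : ∀ a k, k ≤ N.K a → ∀ next, ∃! x : V → ℝ,
      x = stageMatrix φ a k *ᵥ x + stageOffset N φ t a k next := fun a k hk next =>
    Matrix.existsUnique_eq_mulVec_add (stageMatrix_isNilpotent hφ.nonneg hlf hk) _
  choose s hs hs_unique using fun a =>
    exists_backward_solution_of_existsUnique (hstage a (N.K a) le_rfl 0)
      fun k hk => hstage a k hk.le
  refine ⟨fun i a k => s a k i, (isMarginal_iff_stage t hφ.cpu_last).2 hs, ?_⟩
  intro lam' hlam' i a k hk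
  obtain ⟨hlast, hstep⟩ := (isMarginal_iff_stage t hφ.cpu_last).1 hlam' a
  exact congrFun (hs_unique a (fun k i => lam' i a k) hlast hstep k hk) i

/-- **Existence and uniqueness of the marginal vector for loop-free strategies.**
If `(φ,t)` is feasible for `r` and `φ` is loop-free, then there is exactly one
solution `λ` (on the stage coordinates) of the marginal-cost recursion. -/
theorem marginal_exists_unique_of_loopFree
    (N : SCNet V A) (r : V → A → ℝ) (hr : ∀ i a, 0 ≤ r i a)
    (φ : V → Option V → A → ℕ → ℝ) (t : V → A → ℕ → ℝ)
    (hfeas : Feasible N r φ t) (hlf : LoopFree N φ) :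
    ∃ lam : V → A → ℕ → ℝ, IsMarginal N φ t lam ∧
      ∀ lam' : V → A → ℕ → ℝ, IsMarginal N φ t lam' →
        ∀ i a k, k ≤ N.K a → lam' i a k = lam i a k :=
  marginal_exists_unique_of_loopFree_general N r φ t hfeas hlf
end
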